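/- arXiv:2105.06276 — 2 statements merged into one kernel-verified Lean document; each statement's English description precedes it below -/
import Mathlib

section
/- For a conformal map Φ = (φ,ψ) with harmonic components and M = (DΦ)⁻¹, the identity mₕₖ ∂ₕ(m₂ₖ) = 0 holds (summing over h,k ∈ {1,2}). -/
open scoped BigOperators

/-- First-order partial derivative in the `i`-th coordinate direction of `ℝ²`. -/
noncomputable def pd (i : Fin 2) (f : ℝ × ℝ → ℝ) (p : ℝ × ℝ) : ℝ :=
  fderiv ℝ f p (if i = 0 then ((1 : ℝ), (0 : ℝ)) else ((0 : ℝ), (1 : ℝ)))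

lemma pd_congr_nhds {f g : ℝ × ℝ → ℝ} {y : ℝ × ℝ} (h : f =ᶠ[nhds y] g) (i : Fin 2) :
    pd i f y = pd i g y := by unfold pd; rw [h.fderiv_eq]

lemma pd_mul {f g : ℝ × ℝ → ℝ} {y : ℝ × ℝ} (hf : DifferentiableAt ℝ f y)
    (hg : DifferentiableAt ℝ g y) (i : Fin 2) :
    pd i (fun z => f z * g z) y = pd i f y * g y + f y * pd i g y := by
  unfold pd; rw [fderiv_fun_mul hf hg]; simp; ring

lemma pd_sub {f g : ℝ × ℝ → ℝ} {y : ℝ × ℝ} (hf : DifferentiableAt ℝ f y)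
    (hg : DifferentiableAt ℝ g y) (i : Fin 2) :
    pd i (fun z => f z - g z) y = pd i f y - pd i g y := by
  unfold pd; rw [fderiv_fun_sub hf hg]; simp

lemma pd_neg {f : ℝ × ℝ → ℝ} {y : ℝ × ℝ} (i : Fin 2) :
    pd i (fun z => -f z) y = - pd i f y := by
  unfold pd; rw [fderiv_fun_neg]; simp

lemma pd_inv {g : ℝ × ℝ → ℝ} {y : ℝ × ℝ} (hg : DifferentiableAt ℝ g y) (h0 : g y ≠ 0)
    (i : Fin 2) :
    pd i (fun z => (g z)⁻¹) y = - pd i g y / (g y)^2 := by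
  unfold pd
  rw [show (fun z => (g z)⁻¹) = Inv.inv ∘ g from rfl,
    fderiv_comp y (differentiableAt_inv h0) hg]
  simp only [ContinuousLinearMap.comp_apply, ContinuousLinearMap.neg_apply,
    ContinuousLinearMap.mulLeftRight_apply, fderiv_inv, ContinuousLinearMap.smulRight_apply,
    ContinuousLinearMap.one_apply, ContinuousLinearMap.toSpanSingleton_apply, smul_eq_mul]
  field_simp

lemma pd_div {f g : ℝ × ℝ → ℝ} {y : ℝ × ℝ} (hf : DifferentiableAt ℝ f y)
    (hg : DifferentiableAt ℝ g y) (h0 : g y ≠ 0) (i : Fin 2) :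
    pd i (fun z => f z / g z) y = (pd i f y * g y - f y * pd i g y) / (g y)^2 := by
  have : (fun z => f z / g z) = fun z => f z * (g z)⁻¹ := by
    funext z; rw [div_eq_mul_inv]
  rw [this, pd_mul (g := fun z => (g z)⁻¹) hf (hg.inv h0), pd_inv hg h0]
  field_simp
  ring

lemma diff_pd {f : ℝ × ℝ → ℝ} (hf : ContDiff ℝ 2 f) (i : Fin 2) (y : ℝ × ℝ) :
    DifferentiableAt ℝ (fun z => pd i f z) y := by
  have h1 : ContDiff ℝ 1 (fderiv ℝ f) := hf.fderiv_right (by norm_num)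
  exact ((h1.clm_apply contDiff_const).differentiable one_ne_zero).differentiableAt

lemma pd_comm {f : ℝ × ℝ → ℝ} (hf : ContDiff ℝ 2 f) (i j : Fin 2) (y : ℝ × ℝ) :
    pd i (fun z => pd j f z) y = pd j (fun z => pd i f z) y := by
  have h1 : ContDiff ℝ 1 (fderiv ℝ f) := hf.fderiv_right (by norm_num)
  have hdf : ∀ z, HasFDerivAt f (fderiv ℝ f z) z := fun z =>
    ((hf.differentiable (by norm_num)) z).hasFDerivAt
  have hdf2 : HasFDerivAt (fderiv ℝ f) (fderiv ℝ (fderiv ℝ f) y) y :=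
    ((h1.differentiable one_ne_zero) y).hasFDerivAt
  have hsymm := second_derivative_symmetric hdf hdf2
  unfold pd
  rw [fderiv_clm_apply ((h1.differentiable one_ne_zero) y)
    (differentiableAt_const _),
    fderiv_clm_apply ((h1.differentiable one_ne_zero) y)
    (differentiableAt_const _)]
  simp [hsymm _ _]

/-- Jacobian matrix of the map Φ = (φ,ψ). -/
noncomputable def Jmat (φ ψ : ℝ × ℝ → ℝ) (p : ℝ × ℝ) : Matrix (Fin 2) (Fin 2) ℝ :=
  !![pd 0 φ p, pd 1 φ p; pd 0 ψ p, pd 1 ψ p]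

/-- For a C² conformal map Φ = (φ,ψ) with |∇φ| > 0 (so that its components
are harmonic) and M = (DΦ)⁻¹, the identity ∑ₕₖ mₕₖ ∂ₕ(m₂ₖ) = 0 holds on U. -/
theorem statement_11 (U : Set (ℝ × ℝ)) (hU : IsOpen U) (φ ψ : ℝ × ℝ → ℝ)
    (hφ : ContDiff ℝ 2 φ) (hψ : ContDiff ℝ 2 ψ)
    (hCR1 : ∀ p ∈ U, pd 0 φ p = pd 1 ψ p)
    (hCR2 : ∀ p ∈ U, pd 1 φ p = - pd 0 ψ p)
    (hgrad : ∀ p ∈ U, (pd 0 φ p) ^ 2 + (pd 1 φ p) ^ 2 ≠ 0)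
    (M : ℝ × ℝ → Matrix (Fin 2) (Fin 2) ℝ)
    (hM : ∀ p, M p = (Jmat φ ψ p)⁻¹) :
    ∀ y ∈ U, ∑ h : Fin 2, ∑ k : Fin 2, M y h k * pd h (fun z => M z 1 k) y = 0 := by
  intro y hy
  have hva : pd 1 ψ y = pd 0 φ y := (hCR1 y hy).symm
  have hvb : pd 0 ψ y = - pd 1 φ y := by linarith [hCR2 y hy]
  -- entries of M as explicit functions
  have hM10 : (fun z => M z 1 0) = fun z =>
      -(pd 0 ψ z) / (pd 0 φ z * pd 1 ψ z - pd 1 φ z * pd 0 ψ z) := by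
    funext z
    rw [hM, Jmat, Matrix.inv_def, Matrix.det_fin_two_of, Matrix.adjugate_fin_two_of,
      Ring.inverse_eq_inv']
    simp [Matrix.smul_apply, div_eq_inv_mul]
  have hM11 : (fun z => M z 1 1) = fun z =>
      pd 0 φ z / (pd 0 φ z * pd 1 ψ z - pd 1 φ z * pd 0 ψ z) := by
    funext z
    rw [hM, Jmat, Matrix.inv_def, Matrix.det_fin_two_of, Matrix.adjugate_fin_two_of,
      Ring.inverse_eq_inv']
    simp [Matrix.smul_apply, div_eq_inv_mul]
  have hMy00 : M y 0 0 = pd 1 ψ y / (pd 0 φ y * pd 1 ψ y - pd 1 φ y * pd 0 ψ y) := by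
    rw [hM, Jmat, Matrix.inv_def, Matrix.det_fin_two_of, Matrix.adjugate_fin_two_of,
      Ring.inverse_eq_inv']
    simp [Matrix.smul_apply, div_eq_inv_mul]
  have hMy01 : M y 0 1 = -(pd 1 φ y) / (pd 0 φ y * pd 1 ψ y - pd 1 φ y * pd 0 ψ y) := by
    rw [hM, Jmat, Matrix.inv_def, Matrix.det_fin_two_of, Matrix.adjugate_fin_two_of,
      Ring.inverse_eq_inv']
    simp [Matrix.smul_apply, div_eq_inv_mul]
  -- differentiability
  have dA := diff_pd hφ 0
  have dB := diff_pd hφ 1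
  have dC := diff_pd hψ 0
  have dD := diff_pd hψ 1
  have ddt : DifferentiableAt ℝ
      (fun z => pd 0 φ z * pd 1 ψ z - pd 1 φ z * pd 0 ψ z) y :=
    ((dA y).mul (dD y)).sub ((dB y).mul (dC y))
  have h0 : pd 0 φ y * pd 1 ψ y - pd 1 φ y * pd 0 ψ y ≠ 0 := by
    rw [hva, hvb]
    intro hc
    exact hgrad y hy (by linear_combination hc)
  -- derivative of determinant
  have hpdt : ∀ h : Fin 2,
      pd h (fun z => pd 0 φ z * pd 1 ψ z - pd 1 φ z * pd 0 ψ z) y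
        = pd h (fun z => pd 0 φ z) y * pd 1 ψ y + pd 0 φ y * pd h (fun z => pd 1 ψ z) y
          - (pd h (fun z => pd 1 φ z) y * pd 0 ψ y + pd 1 φ y * pd h (fun z => pd 0 ψ z) y) := by
    intro h
    rw [pd_sub (f := fun z => pd 0 φ z * pd 1 ψ z) (g := fun z => pd 1 φ z * pd 0 ψ z)
        ((dA y).mul (dD y)) ((dB y).mul (dC y)), pd_mul (dA y) (dD y),
      pd_mul (dB y) (dC y)]
  -- CR eventually, derivatives of CR relations
  have hEv1 : (fun z => pd 0 φ z) =ᶠ[nhds y] (fun z => pd 1 ψ z) := by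
    filter_upwards [hU.mem_nhds hy] with z hz using hCR1 z hz
  have hEv2 : (fun z => pd 1 φ z) =ᶠ[nhds y] (fun z => -(pd 0 ψ z)) := by
    filter_upwards [hU.mem_nhds hy] with z hz using hCR2 z hz
  have hCRd1 : ∀ h : Fin 2, pd h (fun z => pd 0 φ z) y = pd h (fun z => pd 1 ψ z) y :=
    fun h => pd_congr_nhds hEv1 h
  have hCRd2 : ∀ h : Fin 2, pd h (fun z => pd 1 φ z) y = - pd h (fun z => pd 0 ψ z) y :=
    fun h => by rw [pd_congr_nhds hEv2 h, pd_neg]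
  have hA1 : pd 1 (fun z => pd 0 φ z) y = - pd 0 (fun z => pd 0 ψ z) y := by
    rw [pd_comm hφ 1 0]; exact hCRd2 0
  have hA0 : pd 0 (fun z => pd 0 φ z) y = pd 1 (fun z => pd 0 ψ z) y := by
    rw [hCRd1 0, pd_comm hψ 0 1]
  have hD1 : pd 1 (fun z => pd 1 ψ z) y = - pd 0 (fun z => pd 0 ψ z) y :=
    (hCRd1 1).symm.trans hA1
  have hD0 : pd 0 (fun z => pd 1 ψ z) y = pd 1 (fun z => pd 0 ψ z) y := pd_comm hψ 0 1 y
  -- expand the sum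
  simp only [Fin.sum_univ_two]
  have hMy10 : M y 1 0 = -(pd 0 ψ y) / (pd 0 φ y * pd 1 ψ y - pd 1 φ y * pd 0 ψ y) :=
    congrFun hM10 y
  have hMy11 : M y 1 1 = pd 0 φ y / (pd 0 φ y * pd 1 ψ y - pd 1 φ y * pd 0 ψ y) :=
    congrFun hM11 y
  rw [hM10, hM11, hMy00, hMy01, hMy10, hMy11]
  rw [pd_div (f := fun z => -pd 0 ψ z) ((dC y).neg) ddt h0,
    pd_div (f := fun z => -pd 0 ψ z) ((dC y).neg) ddt h0,
    pd_div (dA y) ddt h0, pd_div (dA y) ddt h0]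
  rw [pd_neg, pd_neg]
  rw [hpdt 0, hpdt 1]
  rw [hA1, hA0, hD1, hD0, hCRd2 0, hCRd2 1, hva, hvb]
  field_simp
  ring_nf
end

section
/- From the two-parameter Carleman-type inequality to doubling: suppose positive quantities F(r) = ∫_{B_r⁺}|v|² satisfy, for all τ ≥ τ̄ and all 0 < 2r < r̄ < r̄₀/2, the estimate r̄(2r)^{-2τ}F(2r) + r̄^{1-2τ}F(r̄) ≤ C[(r/4)^{-2τ}F(r) + (r̄₀/2)^{-2τ}F(r̄₀)]. Then there exist C' > 1 and k > 1 (depending only on C) such that F(2r) ≤ C' N^k F(r) for all sufficiently small r, where N = F(r̄₀)/F(r̄₀/C'). -/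
set_option maxHeartbeats 1000000 in
/-- From the two-parameter Carleman-type inequality to doubling: if the positive
nondecreasing quantities F(r) satisfy, for all τ ≥ τ̄ and 0 < 2r < r̄ < r̄₀/2,
r̄(2r)^{-2τ}F(2r) + r̄^{1-2τ}F(r̄) ≤ C[(r/4)^{-2τ}F(r) + (r̄₀/2)^{-2τ}F(r̄₀)], then there are
C' > 1 and k > 1 such that F(2r) ≤ C' N^k F(r) for all small r, with N = F(r̄₀)/F(r̄₀/C'). -/
theorem statement_17 (r₀ C τbar : ℝ) (F : ℝ → ℝ)
    (hr₀ : 0 < r₀) (hC : 1 < C) (hτ : 1 ≤ τbar)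
    (hFpos : ∀ r : ℝ, 0 < r → r ≤ r₀ → 0 < F r)
    (hFmono : ∀ r s : ℝ, 0 < r → r ≤ s → s ≤ r₀ → F r ≤ F s)
    (hcarl : ∀ τ : ℝ, τbar ≤ τ → ∀ r rb : ℝ, 0 < r → 2 * r < rb → rb < r₀ / 2 →
      rb * (2 * r) ^ (-2 * τ) * F (2 * r) + rb ^ (1 - 2 * τ) * F rb ≤
        C * ((r / 4) ^ (-2 * τ) * F r + (r₀ / 2) ^ (-2 * τ) * F r₀)) :
    ∃ C' : ℝ, 1 < C' ∧ ∃ k : ℝ, 1 < k ∧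
      ∀ r : ℝ, 0 < r → r < r₀ / C' →
        F (2 * r) ≤ C' * (F r₀ / F (r₀ / C')) ^ k * F r := by
  have hCpos : (0:ℝ) < C := by linarith
  set rb : ℝ := r₀ / 4 with hrb_def
  have hrb : 0 < rb := by positivity
  have hrb_le : rb ≤ r₀ := by rw [hrb_def]; linarith
  have hFrb : 0 < F rb := hFpos rb hrb hrb_le
  have hFr₀ : 0 < F r₀ := hFpos r₀ hr₀ le_rfl
  set N₁ : ℝ := F r₀ / F rb with hN₁_def
  have hN₁ : (1:ℝ) ≤ N₁ := (one_le_div hFrb).2 (hFmono rb r₀ hrb hrb_le le_rfl)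
  have hN₁pos : 0 < N₁ := by linarith
  set B : ℝ := (2 * C / rb) * N₁ with hB_def
  have hBpos : 0 < B := by positivity
  set τ : ℝ := max τbar (1 + Real.logb 4 B) with hτ_def
  have hττ : τbar ≤ τ := le_max_left _ _
  have hτpos : 0 < τ := lt_of_lt_of_le (by linarith) hττ
  -- 4^τ ≥ 4B
  have h4τ : 4 * B ≤ (4:ℝ) ^ τ := by
    have h1 : (1 + Real.logb 4 B) ≤ τ := le_max_right _ _
    calc 4 * B = (4:ℝ) ^ (1 + Real.logb 4 B) := by
          rw [Real.rpow_add (by norm_num), Real.rpow_one,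
            Real.rpow_logb (by norm_num) (by norm_num) hBpos]
      _ ≤ (4:ℝ) ^ τ := Real.rpow_le_rpow_of_exponent_le (by norm_num) h1
  have h24 : (2:ℝ) ^ (2 * τ) = (4:ℝ) ^ τ := by
    rw [Real.rpow_mul (by norm_num : (0:ℝ) ≤ 2)]
    norm_num
  set M : ℝ := max 1 (2 * C / rb) with hM_def
  have hM1 : (1:ℝ) ≤ M := le_max_left _ _
  set A : ℝ := (2 * C / rb) * (64:ℝ) ^ τbar * 64 * M ^ 3 with hA_def
  set C' : ℝ := max A 8 with hC'_def
  have hC'8 : (8:ℝ) ≤ C' := le_max_right _ _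
  have hC'pos : (0:ℝ) < C' := by linarith
  refine ⟨C', by linarith, 3, by norm_num, ?_⟩
  intro r hr hrsmall
  -- basic size facts
  have hrsm : r < r₀ / 8 := by
    have : r₀ / C' ≤ r₀ / 8 := div_le_div_of_nonneg_left hr₀.le (by norm_num) hC'8
    linarith
  have h2r : 2 * r < rb := by rw [hrb_def]; linarith
  have hrle : r ≤ r₀ := by linarith
  have hFr : 0 < F r := hFpos r hr hrle
  have hF2r : 0 < F (2 * r) := hFpos _ (by linarith) (by linarith)
  have hcar := hcarl τ hττ r rb hr h2r (by rw [hrb_def]; linarith)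
  -- case analysis on which RHS term dominates
  by_cases hXY : (r₀ / 2) ^ (-2 * τ) * F r₀ ≤ (r / 4) ^ (-2 * τ) * F r
  · -- main case: doubling
    have hA1 : rb * (2 * r) ^ (-2 * τ) * F (2 * r) ≤ 2 * C * ((r / 4) ^ (-2 * τ) * F r) := by
      have hCX := mul_le_mul_of_nonneg_left hXY hCpos.le
      have hpos2 : 0 < rb ^ (1 - 2 * τ) * F rb :=
        mul_pos (Real.rpow_pos_of_pos hrb _) hFrb
      linarith
    have e5 : ((2:ℝ) * r) ^ (-2 * τ) = (8:ℝ) ^ (-2 * τ) * (r / 4) ^ (-2 * τ) := by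
      rw [show (2:ℝ) * r = 8 * (r / 4) by ring,
        Real.mul_rpow (by norm_num) (by positivity)]
    have hspos : 0 < (r / 4 : ℝ) ^ (-2 * τ) := Real.rpow_pos_of_pos (by positivity) _
    rw [e5] at hA1
    have h10 : rb * (8:ℝ) ^ (-2 * τ) * F (2 * r) ≤ 2 * C * F r := by
      have e6 : (rb * (8:ℝ) ^ (-2 * τ) * F (2 * r)) * ((r / 4) ^ (-2 * τ)) =
          rb * ((8:ℝ) ^ (-2 * τ) * (r / 4) ^ (-2 * τ)) * F (2 * r) := by ring
      have e7 : (2 * C * F r) * ((r / 4) ^ (-2 * τ)) =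
          2 * C * ((r / 4) ^ (-2 * τ) * F r) := by ring
      exact le_of_mul_le_mul_right (by rw [e6, e7]; exact hA1) hspos
    have h8pos : 0 < (8:ℝ) ^ (2 * τ) := Real.rpow_pos_of_pos (by norm_num) _
    have h8inv : (8:ℝ) ^ (-2 * τ) * (8:ℝ) ^ (2 * τ) = 1 := by
      rw [← Real.rpow_add (by norm_num : (0:ℝ) < 8), show (-2 * τ + 2 * τ) = 0 by ring,
        Real.rpow_zero]
    have h11 : rb * F (2 * r) ≤ 2 * C * (8:ℝ) ^ (2 * τ) * F r := by
      have h7 := mul_le_mul_of_nonneg_right h10 h8pos.le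
      have h8 : rb * F (2 * r) = rb * (8:ℝ) ^ (-2 * τ) * F (2 * r) * (8:ℝ) ^ (2 * τ) := by
        linear_combination (-rb * F (2 * r)) * h8inv
      linarith
    have h12 : F (2 * r) ≤ (2 * C / rb) * (8:ℝ) ^ (2 * τ) * F r := by
      rw [show (2 * C / rb) * (8:ℝ) ^ (2 * τ) * F r = 2 * C * (8:ℝ) ^ (2 * τ) * F r / rb by ring]
      rw [le_div_iff₀ hrb]
      linarith
    -- bound 8^{2τ} = 64^τ ≤ 64^{τbar} * 64 * (M*N₁)^3
    have h82 : (8:ℝ) ^ (2 * τ) = (64:ℝ) ^ τ := by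
      rw [Real.rpow_mul (by norm_num : (0:ℝ) ≤ 8)]
      norm_num
    set m : ℝ := max 0 (Real.logb 4 B) with hm_def
    have hm0 : 0 ≤ m := le_max_left _ _
    have hτm : τ ≤ τbar + 1 + m := by
      have h1 : Real.logb 4 B ≤ m := le_max_right _ _
      apply max_le <;> [linarith; linarith]
    have h4m : (4:ℝ) ^ m ≤ M * N₁ := by
      rcases le_or_gt (Real.logb 4 B) 0 with h | h
      · rw [hm_def, max_eq_left h, Real.rpow_zero]
        have h1 : (1:ℝ) * 1 ≤ M * N₁ := mul_le_mul hM1 hN₁ zero_le_one (by linarith)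
        linarith
      · rw [hm_def, max_eq_right h.le, Real.rpow_logb (by norm_num) (by norm_num) hBpos]
        have hM2 : 2 * C / rb ≤ M := le_max_right _ _
        rw [hB_def]
        exact mul_le_mul_of_nonneg_right hM2 hN₁pos.le
    have h64m : (64:ℝ) ^ m = ((4:ℝ) ^ m) ^ (3:ℕ) := by
      rw [← Real.rpow_natCast ((4:ℝ) ^ m) 3, ← Real.rpow_mul (by norm_num : (0:ℝ) ≤ 4),
        show (m * ((3:ℕ):ℝ)) = (3:ℝ) * m by push_cast; ring,
        Real.rpow_mul (by norm_num : (0:ℝ) ≤ 4)]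
      norm_num
    have h64τ : (64:ℝ) ^ τ ≤ (64:ℝ) ^ τbar * 64 * (M * N₁) ^ 3 := by
      have step1 : (64:ℝ) ^ τ ≤ (64:ℝ) ^ (τbar + 1 + m) :=
        Real.rpow_le_rpow_of_exponent_le (by norm_num) hτm
      have step2 : (64:ℝ) ^ (τbar + 1 + m) = (64:ℝ) ^ τbar * 64 * (64:ℝ) ^ m := by
        rw [Real.rpow_add (by norm_num : (0:ℝ) < 64), Real.rpow_add (by norm_num : (0:ℝ) < 64),
          Real.rpow_one]
      have step3 : ((4:ℝ) ^ m) ^ (3:ℕ) ≤ (M * N₁) ^ 3 :=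
        pow_le_pow_left₀ (Real.rpow_pos_of_pos (by norm_num) m).le h4m 3
      have h64pos : 0 < (64:ℝ) ^ τbar := Real.rpow_pos_of_pos (by norm_num) _
      calc (64:ℝ) ^ τ ≤ (64:ℝ) ^ τbar * 64 * (64:ℝ) ^ m := by rw [← step2]; exact step1
        _ ≤ (64:ℝ) ^ τbar * 64 * (M * N₁) ^ 3 := by
            rw [h64m]
            exact mul_le_mul_of_nonneg_left step3 (by positivity)
    -- assemble
    have hmain : F (2 * r) ≤ A * N₁ ^ 3 * F r := by
      have h13 : (2 * C / rb) * (8:ℝ) ^ (2 * τ) * F r ≤ A * N₁ ^ 3 * F r := by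
        rw [h82, hA_def]
        have h14 : (2 * C / rb) * (64:ℝ) ^ τ ≤ (2 * C / rb) * ((64:ℝ) ^ τbar * 64 * (M * N₁) ^ 3) :=
          mul_le_mul_of_nonneg_left h64τ (by positivity)
        have h15 : (2 * C / rb) * ((64:ℝ) ^ τbar * 64 * (M * N₁) ^ 3) =
            (2 * C / rb) * (64:ℝ) ^ τbar * 64 * M ^ 3 * N₁ ^ 3 := by ring
        linarith [mul_le_mul_of_nonneg_right h14 hFr.le, h15]
      linarith [h12]
    -- compare N₁ with N
    have hr₀C' : 0 < r₀ / C' := by positivity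
    have hr₀C'le : r₀ / C' ≤ rb := by
      rw [hrb_def]
      exact div_le_div_of_nonneg_left hr₀.le (by norm_num) (by linarith)
    have hFN : 0 < F (r₀ / C') := hFpos _ hr₀C' (by linarith [hrb_le])
    have hNN : N₁ ≤ F r₀ / F (r₀ / C') := by
      rw [hN₁_def]
      exact div_le_div_of_nonneg_left hFr₀.le hFN
        (hFmono _ _ hr₀C' hr₀C'le hrb_le)
    have hNpow : N₁ ^ 3 ≤ (F r₀ / F (r₀ / C')) ^ (3:ℕ) :=
      pow_le_pow_left₀ hN₁pos.le hNN 3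
    have hAC' : A ≤ C' := le_max_left _ _
    have hApos : 0 < A := by rw [hA_def]; positivity
    rw [show (3:ℝ) = ((3:ℕ):ℝ) by norm_num, Real.rpow_natCast]
    calc F (2 * r) ≤ A * N₁ ^ 3 * F r := hmain
      _ ≤ C' * (F r₀ / F (r₀ / C')) ^ (3:ℕ) * F r := by
          have hstep : A * N₁ ^ 3 ≤ C' * (F r₀ / F (r₀ / C')) ^ (3:ℕ) :=
            mul_le_mul hAC' hNpow (pow_pos hN₁pos 3).le hC'pos.le
          exact mul_le_mul_of_nonneg_right hstep hFr.le
  · -- impossible case: contradiction with the choice of τ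
    exfalso
    push_neg at hXY
    have hB1 : rb ^ (1 - 2 * τ) * F rb ≤ 2 * C * ((r₀ / 2) ^ (-2 * τ) * F r₀) := by
      have hL1 : 0 ≤ rb * (2 * r) ^ (-2 * τ) * F (2 * r) := by positivity
      have hCX := mul_le_mul_of_nonneg_left hXY.le hCpos.le
      linarith
    have e1 : rb ^ (1 - 2 * τ) = rb * rb ^ (-2 * τ) := by
      rw [show (1:ℝ) - 2 * τ = 1 + (-2 * τ) by ring, Real.rpow_add hrb, Real.rpow_one]
    have e2 : ((r₀:ℝ) / 2) ^ (-2 * τ) = (2:ℝ) ^ (-2 * τ) * rb ^ (-2 * τ) := by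
      rw [show (r₀:ℝ) / 2 = 2 * rb by rw [hrb_def]; ring,
        Real.mul_rpow (by norm_num) hrb.le]
    rw [e1, e2] at hB1
    have htpos : 0 < rb ^ (-2 * τ) := Real.rpow_pos_of_pos hrb _
    have h5 : rb * F rb ≤ 2 * C * ((2:ℝ) ^ (-2 * τ) * F r₀) := by
      have e6 : (rb * F rb) * rb ^ (-2 * τ) = rb * rb ^ (-2 * τ) * F rb := by ring
      have e7 : (2 * C * ((2:ℝ) ^ (-2 * τ) * F r₀)) * rb ^ (-2 * τ) =
          2 * C * ((2:ℝ) ^ (-2 * τ) * rb ^ (-2 * τ) * F r₀) := by ring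
      exact le_of_mul_le_mul_right (by rw [e6, e7]; exact hB1) htpos
    have h2pos : 0 < (2:ℝ) ^ (2 * τ) := Real.rpow_pos_of_pos (by norm_num) _
    have h2inv : (2:ℝ) ^ (-2 * τ) * (2:ℝ) ^ (2 * τ) = 1 := by
      rw [← Real.rpow_add (by norm_num : (0:ℝ) < 2), show (-2 * τ + 2 * τ) = 0 by ring,
        Real.rpow_zero]
    have h6 : (2:ℝ) ^ (2 * τ) * (rb * F rb) ≤ 2 * C * F r₀ := by
      have h7 := mul_le_mul_of_nonneg_left h5 h2pos.le
      have h8 : (2:ℝ) ^ (2 * τ) * (2 * C * ((2:ℝ) ^ (-2 * τ) * F r₀)) = 2 * C * F r₀ := by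
        linear_combination (2 * C * F r₀) * h2inv
      linarith
    have h9 : (2:ℝ) ^ (2 * τ) ≤ B := by
      rw [hB_def, hN₁_def, div_mul_div_comm, le_div_iff₀ (by positivity)]
      linarith
    rw [h24] at h9
    linarith
end
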